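/- arXiv:2412.17148 — 2 statements merged into one kernel-verified Lean document; each statement's English description precedes it below -/
import Mathlib

section
/- Let d ≥ 2, 0 < α < d, and let g : ℝ^d → [0,∞) be bounded, measurable, with compact support. Set h = g·1_{B_2^c} (the restriction of g to the complement of the ball of radius 2 centered at the origin). Then there is a constant N = N(d, α) such that for every x with |x| ≤ 1, the gradient of P_α h satisfies |D(P_α h)(x)| ≤ N · M_α g(0). -/
/-
As `h` vanishes on `B₂` and `|x| ≤ 1`, the singularity of the kernel `|x - y|^(α - d)` stays at
distance `≥ 1` from the support of `h`, so one may differentiate under the integral sign: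
`|D(P_α h)(x)| ≤ (d - α) ∫ h(y) |x - y|^(α - d - 1) dy ≲ ∫_{|y| ≥ 2} g(y) |y|^(α - d - 1) dy`.
On a dyadic annulus `ρ ≤ |y| < 2ρ` the weight is at most `ρ^(α - d - 1)`, while
`∫_{B_{2ρ}} g ≤ |B₁| (2ρ)^(d - α) M_α g(0)`; so the annulus contributes `≲ ρ⁻¹ M_α g(0)`, and
over `ρ = 2^k · 2` these contributions form a geometric series.
-/

open MeasureTheory ENNReal Metric Set

/-- The Riesz potential `P_α f (x) = ∫ f(y) / |x-y|^(d-α) dy`. -/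
noncomputable def rieszPotential (d : ℕ) (α : ℝ) (f : EuclideanSpace ℝ (Fin d) → ℝ)
    (x : EuclideanSpace ℝ (Fin d)) : ℝ :=
  ∫ y, f y / ‖x - y‖ ^ ((d : ℝ) - α)

/-- The fractional maximal function `M_β g (x) = sup_{ρ>0} ρ^β ⨍_{B_ρ(x)} |g|`. -/
noncomputable def fracMaximal (d : ℕ) (β : ℝ) (g : EuclideanSpace ℝ (Fin d) → ℝ)
    (x : EuclideanSpace ℝ (Fin d)) : ℝ≥0∞ :=
  ⨆ (ρ : ℝ) (_ : 0 < ρ), ENNReal.ofReal (ρ ^ β * ⨍ y in ball x ρ, |g y|)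

section

variable {E : Type*} [NormedAddCommGroup E] [InnerProductSpace ℝ E]

theorem hasFDerivAt_norm_sub_rpow {x y : E} (hxy : x ≠ y) (p : ℝ) :
    HasFDerivAt (fun x ↦ ‖x - y‖ ^ p) ((p * ‖x - y‖ ^ (p - 2)) • innerSL ℝ (x - y)) x := by
  have hsq (z : E) (q : ℝ) : (‖z‖ ^ 2) ^ (q / 2) = ‖z‖ ^ q := by
    rw [← Real.rpow_natCast, ← Real.rpow_mul (norm_nonneg _)]
    ring_nf
  have hne : ‖x - y‖ ^ 2 ≠ 0 := by simpa [sub_eq_zero] using hxy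
  have h := (((hasFDerivAt_id x).sub_const y).norm_sq).rpow_const (p := p / 2) (Or.inl hne)
  rw [show p / 2 - 1 = (p - 2) / 2 by ring] at h
  simp only [id, hsq] at h
  convert h using 1
  ext v
  simp only [smul_apply, ContinuousLinearMap.comp_id, coe_innerSL_apply,
    smul_eq_mul, nsmul_eq_mul, Nat.cast_ofNat]
  ring

theorem norm_smul_innerSL_le (z : E) (p : ℝ) :
    ‖(p * ‖z‖ ^ (p - 2)) • innerSL ℝ z‖ ≤ |p| * ‖z‖ ^ (p - 1) := by
  rcases eq_or_ne z 0 with rfl | hz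
  · simp only [map_zero, smul_zero, norm_zero]
    positivity
  rw [norm_smul, innerSL_apply_norm, Real.norm_eq_abs, abs_mul,
    abs_of_nonneg (Real.rpow_nonneg (norm_nonneg z) _), mul_assoc,
    ← Real.rpow_add_one (norm_ne_zero_iff.2 hz), show p - 2 + 1 = p - 1 by ring]

variable [MeasurableSpace E] [BorelSpace E] [SecondCountableTopology E] {μ : Measure E}

theorem hasFDerivAt_integral_mul_norm_sub_rpow {f : E → ℝ} (hf : Integrable f μ) {p r : ℝ}
    (hp : p ≤ 0) (hr : 0 < r) {x₀ : E} (hf₀ : ∀ y ∈ ball x₀ r, f y = 0) :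
    HasFDerivAt (fun x ↦ ∫ y, f y * ‖x - y‖ ^ p ∂μ)
      (∫ y, f y • (p * ‖x₀ - y‖ ^ (p - 2)) • innerSL ℝ (x₀ - y) ∂μ) x₀ := by
  have hsupp {y : E} (hy : f y ≠ 0) : r ≤ ‖x₀ - y‖ := by
    by_contra h; exact hy (hf₀ y (by rw [mem_ball, dist_eq_norm']; linarith))
  have hnear {x y : E} (hx : x ∈ ball x₀ (r / 2)) (hy : f y ≠ 0) : r / 2 ≤ ‖x - y‖ := by
    rw [mem_ball, dist_eq_norm'] at hx
    linarith [norm_sub_le_norm_sub_add_norm_sub x₀ x y, hsupp hy]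
  have hmeas (x : E) (q : ℝ) : Measurable fun y ↦ ‖x - y‖ ^ q := by fun_prop
  refine hasFDerivAt_integral_of_dominated_of_fderiv_le (F := fun x y ↦ f y * ‖x - y‖ ^ p)
    (F' := fun x y ↦ f y • (p * ‖x - y‖ ^ (p - 2)) • innerSL ℝ (x - y))
    (bound := fun y ↦ |p| * (r / 2) ^ (p - 1) * |f y|)
    (ball_mem_nhds x₀ (half_pos hr)) ?_ ?_ ?_ ?_ ?_ ?_
  · exact .of_forall fun x ↦ hf.aestronglyMeasurable.mul (hmeas x p).aestronglyMeasurable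
  · refine (hf.abs.mul_const (r ^ p)).mono'
      (hf.aestronglyMeasurable.mul (hmeas x₀ p).aestronglyMeasurable) (ae_of_all _ fun y ↦ ?_)
    rcases eq_or_ne (f y) 0 with hy | hy
    · simp [hy]
    rw [norm_mul, Real.norm_eq_abs, Real.norm_of_nonneg (by positivity)]
    exact mul_le_mul_of_nonneg_left (Real.rpow_le_rpow_of_nonpos hr (hsupp hy) hp) (abs_nonneg _)
  · exact hf.aestronglyMeasurable.smul (((hmeas x₀ _).const_mul p).aestronglyMeasurable.smul
      ((innerSL ℝ).continuous.comp (continuous_sub_left x₀)).aestronglyMeasurable)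
  · refine ae_of_all _ fun y x hx ↦ ?_
    rcases eq_or_ne (f y) 0 with hy | hy
    · simp [hy]
    rw [norm_smul, Real.norm_eq_abs, mul_comm]
    grw [norm_smul_innerSL_le,
      Real.rpow_le_rpow_of_nonpos (half_pos hr) (hnear hx hy) (by linarith)]
  · exact hf.abs.const_mul _
  · refine ae_of_all _ fun y x hx ↦ ?_
    rcases eq_or_ne (f y) 0 with hy | hy
    · simp only [hy, zero_mul, zero_smul]
      exact hasFDerivAt_const _ _
    · refine (hasFDerivAt_norm_sub_rpow ?_ p).const_mul (f y) |>.congr_fderiv (by simp)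
      rintro rfl
      simpa using (hnear hx hy).trans_lt' (half_pos hr)

theorem enorm_fderiv_integral_mul_norm_sub_rpow_le {f : E → ℝ} (hf : Integrable f μ) {p r : ℝ}
    (hp : p ≤ 0) (hr : 0 < r) {x₀ : E} (hf₀ : ∀ y ∈ ball x₀ r, f y = 0) :
    ‖fderiv ℝ (fun x ↦ ∫ y, f y * ‖x - y‖ ^ p ∂μ) x₀‖ₑ ≤
      ENNReal.ofReal (-p) * ∫⁻ y, ‖f y‖ₑ * ENNReal.ofReal (‖x₀ - y‖ ^ (p - 1)) ∂μ := by
  rw [(hasFDerivAt_integral_mul_norm_sub_rpow hf hp hr hf₀).fderiv,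
    ← lintegral_const_mul' _ _ ofReal_ne_top]
  refine (enorm_integral_le_lintegral_enorm _).trans (lintegral_mono fun y ↦ ?_)
  rw [enorm_smul, mul_left_comm, ← ofReal_mul (neg_nonneg.2 hp), ← abs_of_nonpos hp]
  exact mul_le_mul' le_rfl
    ((ofReal_norm _).symm.trans_le (ofReal_le_ofReal (norm_smul_innerSL_le _ _)))

end

section

variable {F : Type*} [SeminormedAddCommGroup F]

theorem compl_ball_subset_iUnion_annuli {R : ℝ} (hR : 0 < R) :
    (ball (0 : F) R)ᶜ ⊆ ⋃ k : ℕ, ball 0 (2 ^ (k + 1) * R) \ ball 0 (2 ^ k * R) := by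
  intro y hy
  rw [mem_compl_iff, mem_ball_zero_iff, not_lt] at hy
  obtain ⟨k, hk, hk'⟩ := exists_nat_pow_near ((one_le_div hR).2 hy) one_lt_two
  refine mem_iUnion.2 ⟨k, ?_, ?_⟩
  · rw [mem_ball_zero_iff, ← div_lt_iff₀ hR]; exact hk'
  · rw [mem_ball_zero_iff, not_lt, ← le_div_iff₀ hR]; exact hk

theorem norm_sub_rpow_le {x y : F} (hxy : 2 * ‖x‖ ≤ ‖y‖) (hy : 0 < ‖y‖) {s : ℝ} (hs : s ≤ 0) :
    ‖x - y‖ ^ s ≤ 2 ^ (-s) * ‖y‖ ^ s := by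
  have hfar : ‖y‖ / 2 ≤ ‖x - y‖ := by
    rw [norm_sub_rev]; linarith [norm_sub_norm_le y x]
  calc ‖x - y‖ ^ s ≤ (‖y‖ / 2) ^ s := Real.rpow_le_rpow_of_nonpos (half_pos hy) hfar hs
    _ = 2 ^ (-s) * ‖y‖ ^ s := by
      rw [Real.div_rpow hy.le zero_le_two, Real.rpow_neg zero_le_two, div_eq_inv_mul]

theorem lintegral_enorm_indicator_mul_norm_sub_rpow_le [MeasurableSpace F]
    [OpensMeasurableSpace F] {μ : Measure F} {x : F} {R s : ℝ} (hR : 0 < R) (hx : 2 * ‖x‖ ≤ R)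
    (hs : s ≤ 0) (f : F → ℝ) :
    ∫⁻ y, ‖(ball 0 R)ᶜ.indicator f y‖ₑ * ENNReal.ofReal (‖x - y‖ ^ s) ∂μ ≤
      ENNReal.ofReal (2 ^ (-s)) * ∫⁻ y in (ball 0 R)ᶜ, ‖f y‖ₑ * ENNReal.ofReal (‖y‖ ^ s) ∂μ := by
  have hf (y : F) : ‖(ball 0 R)ᶜ.indicator f y‖ₑ * ENNReal.ofReal (‖x - y‖ ^ s) =
      (ball 0 R)ᶜ.indicator (fun y ↦ ‖f y‖ₑ * ENNReal.ofReal (‖x - y‖ ^ s)) y := by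
    rw [enorm_indicator_eq_indicator_enorm, indicator_mul_left]
  rw [lintegral_congr hf, lintegral_indicator measurableSet_ball.compl,
    ← lintegral_const_mul' _ _ ofReal_ne_top]
  refine setLIntegral_mono' measurableSet_ball.compl fun y hy ↦ ?_
  rw [mem_compl_iff, mem_ball_zero_iff, not_lt] at hy
  rw [mul_left_comm, ← ofReal_mul (by positivity)]
  gcongr
  exact norm_sub_rpow_le (hx.trans hy) (hR.trans_le hy) hs

end

theorem lintegral_ball_enorm_le_fracMaximal {d : ℕ} {β ρ : ℝ} {g : EuclideanSpace ℝ (Fin d) → ℝ}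
    {x : EuclideanSpace ℝ (Fin d)} (hρ : 0 < ρ) (hg : IntegrableOn g (ball x ρ)) :
    ∫⁻ y in ball x ρ, ‖g y‖ₑ ≤
      volume (ball (0 : EuclideanSpace ℝ (Fin d)) 1) * ENNReal.ofReal (ρ ^ ((d : ℝ) - β)) *
        fracMaximal d β g x := by
  set A := ⨍ y in ball x ρ, |g y|
  have hM : ENNReal.ofReal (ρ ^ β * A) ≤ fracMaximal d β g x :=
    le_iSup₂ (f := fun ρ (_ : 0 < ρ) ↦ ENNReal.ofReal (ρ ^ β * ⨍ y in ball x ρ, |g y|)) ρ hρ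
  have hρd : ρ ^ d * A = ρ ^ ((d : ℝ) - β) * (ρ ^ β * A) := by
    rw [← mul_assoc, ← Real.rpow_add hρ, sub_add_cancel, Real.rpow_natCast]
  calc ∫⁻ y in ball x ρ, ‖g y‖ₑ = ENNReal.ofReal (∫ y in ball x ρ, |g y|) :=
        (ofReal_integral_norm_eq_lintegral_enorm hg).symm
    _ = volume (ball x ρ) * ENNReal.ofReal A := by
        rw [← measure_smul_setAverage _ measure_ball_lt_top.ne, smul_eq_mul,
          ofReal_mul measureReal_nonneg, measureReal_def, ofReal_toReal measure_ball_lt_top.ne]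
    _ = volume (ball (0 : EuclideanSpace ℝ (Fin d)) 1) *
          (ENNReal.ofReal (ρ ^ ((d : ℝ) - β)) * ENNReal.ofReal (ρ ^ β * A)) := by
        rw [Measure.addHaar_ball_of_pos _ _ hρ, finrank_euclideanSpace_fin, mul_comm _ (volume _),
          mul_assoc, ← ofReal_mul (by positivity), hρd, ofReal_mul (by positivity)]
    _ ≤ _ := by rw [mul_assoc]; gcongr

theorem two_mul_rpow_mul_rpow_neg_sub_one {t : ℝ} (ht : 0 < t) (a : ℝ) :
    (2 * t) ^ a * t ^ (-a - 1) = 2 ^ a / t := by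
  rw [Real.mul_rpow zero_le_two ht.le, mul_assoc, ← Real.rpow_add ht,
    show a + (-a - 1) = -1 by ring, Real.rpow_neg_one, div_eq_mul_inv]

theorem lintegral_annulus_enorm_mul_rpow_le {d : ℕ} {β ρ : ℝ}
    {g : EuclideanSpace ℝ (Fin d) → ℝ} (hβ : β ≤ d + 1) (hρ : 0 < ρ) (hg : LocallyIntegrable g) :
    ∫⁻ y in ball 0 (2 * ρ) \ ball 0 ρ, ‖g y‖ₑ * ENNReal.ofReal (‖y‖ ^ (β - d - 1)) ≤
      volume (ball (0 : EuclideanSpace ℝ (Fin d)) 1) * ENNReal.ofReal (2 ^ ((d : ℝ) - β) / ρ) *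
        fracMaximal d β g 0 := by
  have hweight : ENNReal.ofReal ((2 * ρ) ^ ((d : ℝ) - β)) * ENNReal.ofReal (ρ ^ (β - d - 1)) =
      ENNReal.ofReal (2 ^ ((d : ℝ) - β) / ρ) := by
    rw [← ofReal_mul (by positivity), show β - d - 1 = -((d : ℝ) - β) - 1 by ring,
      two_mul_rpow_mul_rpow_neg_sub_one hρ]
  calc _ ≤ ∫⁻ y in ball 0 (2 * ρ) \ ball 0 ρ, ‖g y‖ₑ * ENNReal.ofReal (ρ ^ (β - d - 1)) := by
        refine setLIntegral_mono' (measurableSet_ball.diff measurableSet_ball) fun y hy ↦ ?_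
        rw [mem_sdiff, mem_ball_zero_iff, mem_ball_zero_iff, not_lt] at hy
        exact mul_le_mul' le_rfl
          (ofReal_le_ofReal (Real.rpow_le_rpow_of_nonpos hρ hy.2 (by linarith)))
    _ ≤ (∫⁻ y in ball 0 (2 * ρ), ‖g y‖ₑ) * ENNReal.ofReal (ρ ^ (β - d - 1)) := by
        rw [lintegral_mul_const' _ _ ofReal_ne_top]
        exact mul_le_mul' (lintegral_mono_set sdiff_subset) le_rfl
    _ ≤ volume (ball (0 : EuclideanSpace ℝ (Fin d)) 1) *
          ENNReal.ofReal ((2 * ρ) ^ ((d : ℝ) - β)) * fracMaximal d β g 0 *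
          ENNReal.ofReal (ρ ^ (β - d - 1)) := by
        gcongr
        exact lintegral_ball_enorm_le_fracMaximal (by positivity)
          (hg.integrableOn_isCompact (isCompact_closedBall 0 _) |>.mono_set ball_subset_closedBall)
    _ = _ := by rw [← hweight]; ring

theorem lintegral_compl_ball_enorm_mul_rpow_le {d : ℕ} {β R : ℝ}
    {g : EuclideanSpace ℝ (Fin d) → ℝ} (hβ : β ≤ d + 1) (hR : 0 < R) (hg : LocallyIntegrable g) :
    ∫⁻ y in (ball 0 R)ᶜ, ‖g y‖ₑ * ENNReal.ofReal (‖y‖ ^ (β - d - 1)) ≤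
      volume (ball (0 : EuclideanSpace ℝ (Fin d)) 1) * ENNReal.ofReal (2 ^ ((d : ℝ) - β + 1) / R) *
        fracMaximal d β g 0 := by
  set C := volume (ball (0 : EuclideanSpace ℝ (Fin d)) 1) *
    ENNReal.ofReal (2 ^ ((d : ℝ) - β) / R) * fracMaximal d β g 0
  have hannulus (k : ℕ) : ∫⁻ y in ball 0 (2 ^ (k + 1) * R) \ ball 0 (2 ^ k * R),
      ‖g y‖ₑ * ENNReal.ofReal (‖y‖ ^ (β - d - 1)) ≤ C * 2⁻¹ ^ k := by
    have hdyadic : 2 ^ ((d : ℝ) - β) / (2 ^ k * R) = 2 ^ ((d : ℝ) - β) / R * 2⁻¹ ^ k := by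
      rw [inv_pow, div_mul_eq_div_div_swap, div_eq_mul_inv _ ((2 : ℝ) ^ k)]
    rw [pow_succ, mul_comm _ (2 : ℝ), mul_assoc]
    refine (lintegral_annulus_enorm_mul_rpow_le hβ (by positivity) hg).trans_eq ?_
    rw [hdyadic, ofReal_mul (by positivity), ofReal_pow (by norm_num), ofReal_inv_of_pos two_pos,
      ofReal_ofNat]
    ring
  calc _ ≤ ∫⁻ y in ⋃ k : ℕ, ball 0 (2 ^ (k + 1) * R) \ ball 0 (2 ^ k * R),
          ‖g y‖ₑ * ENNReal.ofReal (‖y‖ ^ (β - d - 1)) :=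
        lintegral_mono_set (compl_ball_subset_iUnion_annuli hR)
    _ ≤ ∑' k : ℕ, C * 2⁻¹ ^ k := (lintegral_iUnion_le _ _).trans (ENNReal.tsum_le_tsum hannulus)
    _ = C * 2 := by rw [ENNReal.tsum_mul_left, ENNReal.tsum_geometric, one_sub_inv_two, inv_inv]
    _ = _ := by
        rw [Real.rpow_add_one two_ne_zero, mul_div_right_comm, ofReal_mul (by positivity),
          ofReal_ofNat]
        ring

theorem rieszPotential_eq_integral_mul_rpow (d : ℕ) (α : ℝ) (f : EuclideanSpace ℝ (Fin d) → ℝ) :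
    rieszPotential d α f = fun x ↦ ∫ y, f y * ‖x - y‖ ^ (α - d) := by
  ext x
  simp_rw [rieszPotential, div_eq_mul_inv, ← Real.rpow_neg (norm_nonneg _), neg_sub]

theorem grad_riesz_far_part_le_general (d : ℕ) (α : ℝ) (hαd : α < d) :
    ∃ N : ℝ, 0 < N ∧
      ∀ g : EuclideanSpace ℝ (Fin d) → ℝ,
        Measurable g → HasCompactSupport g → (∀ x, 0 ≤ g x) →
        (∃ C : ℝ, ∀ x, g x ≤ C) →
        ∀ x : EuclideanSpace ℝ (Fin d), ‖x‖ ≤ 1 →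
          ENNReal.ofReal
              ‖fderiv ℝ (rieszPotential d α ((ball (0 : EuclideanSpace ℝ (Fin d)) 2)ᶜ.indicator g)) x‖ ≤
            ENNReal.ofReal N * fracMaximal d α g 0 := by
  set v := volume (ball (0 : EuclideanSpace ℝ (Fin d)) 1)
  have hv : 0 < v.toReal := toReal_pos (measure_ball_pos _ _ one_pos).ne' measure_ball_lt_top.ne
  have hdα : 0 < (d : ℝ) - α := sub_pos.2 hαd
  refine ⟨(d - α) * 2 ^ (-(α - d - 1)) * (2 ^ ((d : ℝ) - α + 1) / 2) * v.toReal, by positivity, ?_⟩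
  rintro g hgm hgc hg0 ⟨C, hgC⟩ x hx
  have hg : Integrable g := memLp_one_iff_integrable.1 <| hgc.memLp_of_bound
    hgm.aestronglyMeasurable C (ae_of_all _ fun y ↦ (Real.norm_of_nonneg (hg0 y)).trans_le (hgC y))
  have hvanish : ∀ y ∈ ball x 1, (ball 0 2)ᶜ.indicator g y = 0 := fun y hy ↦ by
    refine indicator_of_notMem (notMem_compl_iff.2 (mem_ball_zero_iff.2 ?_)) g
    rw [mem_ball, dist_eq_norm] at hy
    linarith [norm_sub_norm_le y x]
  calc _ ≤ ENNReal.ofReal (-(α - d)) * ∫⁻ y, ‖(ball 0 2)ᶜ.indicator g y‖ₑ *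
          ENNReal.ofReal (‖x - y‖ ^ (α - d - 1)) := by
        rw [ofReal_norm, rieszPotential_eq_integral_mul_rpow]
        exact enorm_fderiv_integral_mul_norm_sub_rpow_le (hg.indicator measurableSet_ball.compl)
          (by linarith) one_pos hvanish
    _ ≤ ENNReal.ofReal (d - α) * (ENNReal.ofReal (2 ^ (-(α - d - 1))) *
          ∫⁻ y in (ball 0 2)ᶜ, ‖g y‖ₑ * ENNReal.ofReal (‖y‖ ^ (α - d - 1))) := by
        rw [neg_sub]
        exact mul_le_mul' le_rfl (lintegral_enorm_indicator_mul_norm_sub_rpow_le two_pos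
          (by linarith) (by linarith) g)
    _ ≤ ENNReal.ofReal (d - α) * (ENNReal.ofReal (2 ^ (-(α - d - 1))) *
          (v * ENNReal.ofReal (2 ^ ((d : ℝ) - α + 1) / 2) * fracMaximal d α g 0)) :=
        mul_le_mul' le_rfl (mul_le_mul' le_rfl
          (lintegral_compl_ball_enorm_mul_rpow_le (by linarith) two_pos hg.locallyIntegrable))
    _ = _ := by
        rw [ofReal_mul (by positivity), ofReal_mul (by positivity), ofReal_mul (by positivity),
          ofReal_toReal measure_ball_lt_top.ne]
        ring

/-- For `h = g·1_{B_2^c}`, the gradient bound `|D(P_α h)(x)| ≤ N M_α g(0)` for `|x| ≤ 1`. -/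
theorem grad_riesz_far_part_le (d : ℕ) (hd : 2 ≤ d) (α : ℝ)
    (hα0 : 0 < α) (hαd : α < d) :
    ∃ N : ℝ, 0 < N ∧
      ∀ g : EuclideanSpace ℝ (Fin d) → ℝ,
        Measurable g → HasCompactSupport g → (∀ x, 0 ≤ g x) →
        (∃ C : ℝ, ∀ x, g x ≤ C) →
        ∀ x : EuclideanSpace ℝ (Fin d), ‖x‖ ≤ 1 →
          ENNReal.ofReal
              ‖fderiv ℝ (rieszPotential d α ((ball (0 : EuclideanSpace ℝ (Fin d)) 2)ᶜ.indicator g)) x‖ ≤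
            ENNReal.ofReal N * fracMaximal d α g 0 :=
  grad_riesz_far_part_le_general d α hαd
end

section
/- (Hardy's inequality, second order) Let d ≥ 2 and 1 < r < d/2. There is a constant N = N(d, r) such that for every u ∈ C_0^∞(ℝ^d), ∫_{ℝ^d} |u(x)|^r / |x|^{2r} dx ≤ N ∫_{ℝ^d} |D²u(x)|^r dx, where D²u denotes the Hessian matrix of u. -/
open MeasureTheory ENNReal Metric Set


lemma hardy_pointwise {d : ℕ} (u : EuclideanSpace ℝ (Fin d) → ℝ)
    (hu : ContDiff ℝ (⊤ : ℕ∞) u) (hsupp : HasCompactSupport u)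
    (x : EuclideanSpace ℝ (Fin d)) (hx : x ≠ 0) :
    ENNReal.ofReal |u x| ≤
      ∫⁻ t in Ioi (1:ℝ),
        ENNReal.ofReal (‖x‖ ^ 2 * (t * ‖fderiv ℝ (fderiv ℝ u) (t • x)‖)) := by
  set f' := fderiv ℝ u with hf'
  set f'' := fderiv ℝ f' with hf''
  have hxn : 0 < ‖x‖ := norm_pos_iff.2 hx
  obtain ⟨R, hR⟩ := hsupp.isBounded.subset_closedBall 0
  set M : ℝ := max 2 ((R + 1) / ‖x‖) with hM
  have hM1 : (1 : ℝ) < M := lt_of_lt_of_le one_lt_two (le_max_left _ _)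
  have hMout : ∀ t : ℝ, M ≤ t → (t • x) ∉ tsupport u := by
    intro t ht hmem
    have h1 := hR hmem
    have h2 : (R + 1) / ‖x‖ ≤ t := le_trans (le_max_right _ _) ht
    have h3 : R + 1 ≤ t * ‖x‖ := (div_le_iff₀ hxn).mp h2
    have h4 : ‖t • x‖ ≤ R := by simpa using h1
    have ht2 : (2:ℝ) ≤ t := le_trans (le_max_left _ _) ht
    have ht0 : 0 ≤ t := by linarith
    rw [norm_smul, Real.norm_eq_abs, abs_of_nonneg ht0] at h4
    linarith
  -- differentiability along the ray
  have hud : Differentiable ℝ u := hu.differentiable (by simp)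
  have hucd : ContDiff ℝ (⊤ : ℕ∞) f' := hu.fderiv_right (by simp)
  have hf'd : Differentiable ℝ f' := hucd.differentiable (by simp)
  have hline : ∀ s : ℝ, HasDerivAt (fun t : ℝ => t • x) x s := by
    intro s
    simpa using (hasDerivAt_id s).smul_const x
  have hd1 : ∀ s : ℝ, HasDerivAt (fun t : ℝ => u (t • x)) (f' (s • x) x) s := by
    intro s
    exact (hud (s • x)).hasFDerivAt.comp_hasDerivAt s (hline s)
  have hd2 : ∀ s : ℝ, HasDerivAt (fun t : ℝ => f' (t • x) x) (f'' (s • x) x x) s := by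
    intro s
    have h1 : HasDerivAt (fun t : ℝ => f' (t • x)) (f'' (s • x) x) s :=
      (hf'd (s • x)).hasFDerivAt.comp_hasDerivAt s (hline s)
    simpa using h1.clm_apply (hasDerivAt_const s x)
  set ψ : ℝ → ℝ := fun t => (t - 1) * f' (t • x) x - u (t • x) with hψdef
  have hψ : ∀ s : ℝ, HasDerivAt ψ ((s - 1) * (f'' (s • x) x x)) s := by
    intro s
    have h1 : HasDerivAt (fun t : ℝ => t - 1) 1 s := (hasDerivAt_id s).sub_const 1
    have h2 := (h1.mul (hd2 s)).sub (hd1 s)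
    refine h2.congr_deriv ?_
    ring
  have hf''cont : Continuous f'' := hucd.continuous_fderiv (by simp)
  have hcont : Continuous fun s : ℝ => (s - 1) * (f'' (s • x) x x) := by
    have : Continuous fun s : ℝ => f'' (s • x) := hf''cont.comp (continuous_id.smul continuous_const)
    exact (continuous_id.sub continuous_const).mul
      (((this.clm_apply continuous_const).clm_apply continuous_const))
  have hFTC : ∫ s in (1:ℝ)..M, (s - 1) * (f'' (s • x) x x) = ψ M - ψ 1 :=
    intervalIntegral.integral_eq_sub_of_hasDerivAt (fun s _ => hψ s)
      (hcont.intervalIntegrable 1 M)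
  have hψM : ψ M = 0 := by
    have h1 : u (M • x) = 0 := image_eq_zero_of_notMem_tsupport (hMout M le_rfl)
    have h2 : f' (M • x) = 0 := by
      by_contra h
      exact hMout M le_rfl (support_fderiv_subset ℝ (Function.mem_support.2 h))
    simp [hψdef, h1, h2]
  have hψ1 : ψ 1 = -u x := by simp [hψdef]
  have hux : u x = ∫ s in (1:ℝ)..M, (s - 1) * (f'' (s • x) x x) := by
    rw [hFTC, hψM, hψ1]; ring
  -- bound
  set F : ℝ → ℝ := fun t => ‖x‖ ^ 2 * (t * ‖f'' (t • x)‖) with hF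
  have hFcont : Continuous F := by
    apply continuous_const.mul
    exact continuous_id.mul (Continuous.norm (E := EuclideanSpace ℝ (Fin d) →L[ℝ] EuclideanSpace ℝ (Fin d) →L[ℝ] ℝ) (hf''cont.comp (continuous_id.smul continuous_const)))
  have hFnn : ∀ t, 1 ≤ t → 0 ≤ F t := fun t ht => by
    have : (0:ℝ) ≤ t := le_trans zero_le_one ht
    positivity
  have habs : |u x| ≤ ∫ s in (1:ℝ)..M, F s := by
    rw [hux]
    refine le_trans (intervalIntegral.abs_integral_le_integral_abs hM1.le) ?_
    apply intervalIntegral.integral_mono_on hM1.le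
      ((hcont.abs).intervalIntegrable 1 M) (hFcont.intervalIntegrable 1 M)
    intro s hs
    have hs1 : (1:ℝ) ≤ s := hs.1
    have hs0 : (0:ℝ) ≤ s := le_trans zero_le_one hs1
    have h1 : |s - 1| ≤ s := by rw [abs_of_nonneg (by linarith)]; linarith
    have h2 : |f'' (s • x) x x| ≤ ‖f'' (s • x)‖ * ‖x‖ * ‖x‖ := by
      calc |f'' (s • x) x x| ≤ ‖f'' (s • x) x‖ * ‖x‖ :=
            (f'' (s • x) x).le_opNorm x
        _ ≤ ‖f'' (s • x)‖ * ‖x‖ * ‖x‖ :=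
            mul_le_mul_of_nonneg_right ((f'' (s • x)).le_opNorm x) (norm_nonneg x)
    calc |(s - 1) * (f'' (s • x) x x)| = |s - 1| * |f'' (s • x) x x| := abs_mul _ _
      _ ≤ s * (‖f'' (s • x)‖ * ‖x‖ * ‖x‖) := by
          apply mul_le_mul h1 h2 (abs_nonneg _) hs0
      _ = F s := by rw [hF]; ring
  have hIoc : ∫ s in (1:ℝ)..M, F s = ∫ s in Ioc (1:ℝ) M, F s :=
    intervalIntegral.integral_of_le hM1.le
  calc ENNReal.ofReal |u x| ≤ ENNReal.ofReal (∫ s in Ioc (1:ℝ) M, F s) := by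
        rw [← hIoc]; exact ENNReal.ofReal_le_ofReal habs
    _ = ∫⁻ s in Ioc (1:ℝ) M, ENNReal.ofReal (F s) :=
        ofReal_integral_eq_lintegral_ofReal hFcont.integrableOn_Ioc
          (ae_restrict_of_forall_mem measurableSet_Ioc fun s hs => hFnn s hs.1.le)
    _ ≤ ∫⁻ s in Ioi (1:ℝ), ENNReal.ofReal (F s) :=
        lintegral_mono_set Ioc_subset_Ioi_self


section aux

lemma lint_scale {d : ℕ} (t : ℝ) (ht : t ≠ 0) (f : EuclideanSpace ℝ (Fin d) → ℝ≥0∞)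
    (hf : Measurable f) :
    ∫⁻ x, f (t • x) = ENNReal.ofReal ((|t| ^ d)⁻¹) * ∫⁻ y, f y := by
  rw [← lintegral_map hf (measurable_const_smul t), Measure.map_addHaar_smul volume ht,
    finrank_euclideanSpace_fin, lintegral_smul_measure]
  simp [abs_inv, abs_pow]

end aux

/-- Hardy's inequality (second order): `∫ |u|^r/|x|^{2r} ≤ N ∫ |D²u|^r` for `u ∈ C_0^∞`,
`1 < r < d/2`. -/
theorem hardy_second_order (d : ℕ) (hd : 2 ≤ d) (r : ℝ) (hr : 1 < r) (hrd : r < d / 2) :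
    ∃ N : ℝ, 0 < N ∧
      ∀ u : EuclideanSpace ℝ (Fin d) → ℝ,
        ContDiff ℝ (⊤ : ℕ∞) u → HasCompactSupport u →
        ∫⁻ x, ENNReal.ofReal (|u x| ^ r / ‖x‖ ^ (2 * r)) ≤
          ENNReal.ofReal N * ∫⁻ x, ENNReal.ofReal (‖fderiv ℝ (fderiv ℝ u) x‖ ^ r) := by
  have hr0 : (0:ℝ) < r := by linarith
  have hr1 : (0:ℝ) < r - 1 := by linarith
  have hrd' : 2 * r < d := by linarith
  have hd2 : (2:ℝ) < d := by linarith
  set q : ℝ := r / (r - 1) with hqdef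
  have hq : r.HolderConjugate q := (Real.holderConjugate_iff_eq_conjExponent hr).2 rfl
  have hq0 : 0 < q := hq.symm.pos
  set b : ℝ := (d - 2) / (2 * r) with hbdef
  have hb0 : 0 < b := div_pos (by linarith) (by linarith)
  have hbq : 1 < b * q := by
    rw [hbdef, hqdef, div_mul_div_comm, lt_div_iff₀ (by positivity)]
    nlinarith
  have hbr : b * r = (d - 2) / 2 := by
    rw [hbdef]; field_simp
  have hexp2 : (1 + b) * r - d < -1 := by
    have : (1 + b) * r = r + b * r := by ring
    rw [this, hbr]; linarith
  set κ : ℝ≥0∞ := ∫⁻ t in Ioi (1:ℝ), ENNReal.ofReal (t ^ (-(b * q))) with hκdef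
  have hκ : κ ≠ ∞ :=
    (integrableOn_Ioi_rpow_of_lt (by linarith : -(b * q) < -1) one_pos).lintegral_lt_top.ne
  set κ₂ : ℝ≥0∞ := ∫⁻ t in Ioi (1:ℝ), ENNReal.ofReal (t ^ ((1 + b) * r - d)) with hκ₂def
  have hκ₂ : κ₂ ≠ ∞ :=
    (integrableOn_Ioi_rpow_of_lt hexp2 one_pos).lintegral_lt_top.ne
  set C : ℝ≥0∞ := κ ^ (r / q) * κ₂ with hCdef
  have hC : C ≠ ∞ :=
    ENNReal.mul_ne_top (ENNReal.rpow_ne_top_of_nonneg (by positivity) hκ) hκ₂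
  refine ⟨C.toReal + 1, by positivity, ?_⟩
  intro u hu hsupp
  set g : EuclideanSpace ℝ (Fin d) → ℝ := fun y => ‖fderiv ℝ (fderiv ℝ u) y‖ with hgdef
  have hgcont : Continuous g := ((hu.fderiv_right (m := (⊤ : ℕ∞)) (by simp)).continuous_fderiv (by simp)).norm
  have hgnn : ∀ y, 0 ≤ g y := fun y => ContinuousLinearMap.opNorm_nonneg _
  set G : ℝ≥0∞ := ∫⁻ y, ENNReal.ofReal (g y ^ r) with hGdef
  -- measurability of the main kernel
  have hKm : Measurable fun p : EuclideanSpace ℝ (Fin d) × ℝ =>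
      ENNReal.ofReal (p.2 ^ ((1 + b) * r) * g (p.2 • p.1) ^ r) :=
    ENNReal.measurable_ofReal.comp
      ((measurable_snd.pow_const _).mul
        ((hgcont.measurable.comp (measurable_snd.smul measurable_fst)).pow_const _))
  -- key pointwise bound
  have key : ∀ x : EuclideanSpace ℝ (Fin d), x ≠ 0 →
      ENNReal.ofReal (|u x| ^ r / ‖x‖ ^ (2 * r)) ≤
        κ ^ (r / q) *
          ∫⁻ t in Ioi (1:ℝ), ENNReal.ofReal (t ^ ((1 + b) * r) * g (t • x) ^ r) := by
    intro x hx
    have hxn : 0 < ‖x‖ := norm_pos_iff.2 hx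
    set I : ℝ≥0∞ := ∫⁻ t in Ioi (1:ℝ), ENNReal.ofReal (t * g (t • x)) with hIdef
    have hI1 : ENNReal.ofReal |u x| ≤ ENNReal.ofReal (‖x‖ ^ 2) * I := by
      refine le_trans (hardy_pointwise u hu hsupp x hx) ?_
      rw [hIdef, ← lintegral_const_mul' _ _ ENNReal.ofReal_ne_top]
      refine lintegral_mono fun t => ?_
      rw [← ENNReal.ofReal_mul (sq_nonneg _)]
    have hdiv : ENNReal.ofReal |u x| / ENNReal.ofReal (‖x‖ ^ 2) ≤ I := by
      refine ENNReal.div_le_of_le_mul' hI1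
    have hLHSeq : ENNReal.ofReal (|u x| ^ r / ‖x‖ ^ (2 * r)) =
        (ENNReal.ofReal |u x| / ENNReal.ofReal (‖x‖ ^ 2)) ^ r := by
      have h2r : ‖x‖ ^ (2 * r) = (‖x‖ ^ 2) ^ r := by
        rw [← Real.rpow_natCast ‖x‖ 2, ← Real.rpow_mul (norm_nonneg x)]
        norm_num
      rw [h2r, ← Real.div_rpow (abs_nonneg _) (by positivity),
        ← ENNReal.ofReal_rpow_of_nonneg (by positivity) hr0.le,
        ENNReal.ofReal_div_of_pos (by positivity)]
    -- Hölder
    set F : ℝ → ℝ≥0∞ := fun t => ENNReal.ofReal (t ^ (1 + b) * g (t • x)) with hFdef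
    set H : ℝ → ℝ≥0∞ := fun t => ENNReal.ofReal (t ^ (-b)) with hHdef
    have hFm : Measurable F :=
      ENNReal.measurable_ofReal.comp ((measurable_id.pow_const _).mul
        (hgcont.measurable.comp (measurable_id.smul_const x)))
    have hHm : Measurable H :=
      ENNReal.measurable_ofReal.comp (measurable_id.pow_const _)
    have hIeq : I = ∫⁻ t in Ioi (1:ℝ), F t * H t := by
      refine setLIntegral_congr_fun measurableSet_Ioi (fun t ht => ?_)
      have ht0 : (0:ℝ) < t := lt_trans one_pos ht
      rw [hFdef, hHdef, ← ENNReal.ofReal_mul (by positivity)]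
      congr 1
      rw [mul_right_comm, ← Real.rpow_add ht0, add_neg_cancel_right, Real.rpow_one]
    have hHold := ENNReal.lintegral_mul_le_Lp_mul_Lq (volume.restrict (Ioi 1)) hq
      hFm.aemeasurable hHm.aemeasurable
    have hA : ∫⁻ t in Ioi (1:ℝ), F t ^ r =
        ∫⁻ t in Ioi (1:ℝ), ENNReal.ofReal (t ^ ((1 + b) * r) * g (t • x) ^ r) := by
      refine setLIntegral_congr_fun measurableSet_Ioi (fun t ht => ?_)
      have ht0 : (0:ℝ) ≤ t := le_of_lt (lt_trans one_pos ht)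
      rw [hFdef, ENNReal.ofReal_rpow_of_nonneg (by positivity) hr0.le]
      congr 1
      rw [Real.mul_rpow (by positivity) (hgnn _), ← Real.rpow_mul ht0]
    have hB : ∫⁻ t in Ioi (1:ℝ), H t ^ q = κ := by
      rw [hκdef]
      refine setLIntegral_congr_fun measurableSet_Ioi (fun t ht => ?_)
      have ht0 : (0:ℝ) ≤ t := le_of_lt (lt_trans one_pos ht)
      rw [hHdef, ENNReal.ofReal_rpow_of_nonneg (by positivity) hq0.le]
      congr 1
      rw [← Real.rpow_mul ht0, neg_mul]
    have hIr : I ^ r ≤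
        (∫⁻ t in Ioi (1:ℝ), ENNReal.ofReal (t ^ ((1 + b) * r) * g (t • x) ^ r)) *
          κ ^ (r / q) := by
      calc I ^ r ≤ ((∫⁻ t in Ioi (1:ℝ), F t ^ r) ^ (1 / r) *
              (∫⁻ t in Ioi (1:ℝ), H t ^ q) ^ (1 / q)) ^ r := by
            rw [hIeq]; exact ENNReal.rpow_le_rpow hHold hr0.le
        _ = (∫⁻ t in Ioi (1:ℝ), F t ^ r) *
              (∫⁻ t in Ioi (1:ℝ), H t ^ q) ^ (r / q) := by
            rw [ENNReal.mul_rpow_of_nonneg _ _ hr0.le, ← ENNReal.rpow_mul,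
              ← ENNReal.rpow_mul, one_div_mul_cancel hr0.ne', ENNReal.rpow_one]
            congr 2
            field_simp
        _ = _ := by rw [hA, hB]
    calc ENNReal.ofReal (|u x| ^ r / ‖x‖ ^ (2 * r)) =
          (ENNReal.ofReal |u x| / ENNReal.ofReal (‖x‖ ^ 2)) ^ r := hLHSeq
      _ ≤ I ^ r := ENNReal.rpow_le_rpow hdiv hr0.le
      _ ≤ _ := by rw [mul_comm]; exact hIr
  -- a.e. reduction
  haveI hnt : Nontrivial (EuclideanSpace ℝ (Fin d)) := by
    refine ⟨⟨0, EuclideanSpace.single (⟨0, by omega⟩ : Fin d) (1:ℝ), fun h => ?_⟩⟩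
    have := congrArg (fun v => v (⟨0, by omega⟩ : Fin d)) h
    simp [EuclideanSpace.single_apply] at this
  haveI hna : NullSingletonClass (volume : Measure (EuclideanSpace ℝ (Fin d))) := by
    infer_instance
  have hae : ∀ᵐ x : EuclideanSpace ℝ (Fin d), x ≠ 0 := by
    rw [ae_iff]
    have hset : {a : EuclideanSpace ℝ (Fin d) | ¬ a ≠ 0} = {0} := by ext y; simp
    rw [hset]
    exact measure_singleton 0
  calc ∫⁻ x, ENNReal.ofReal (|u x| ^ r / ‖x‖ ^ (2 * r)) ≤
        ∫⁻ x, κ ^ (r / q) *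
          ∫⁻ t in Ioi (1:ℝ), ENNReal.ofReal (t ^ ((1 + b) * r) * g (t • x) ^ r) := by
        refine lintegral_mono_ae (hae.mono fun x hx => key x hx)
    _ = κ ^ (r / q) * ∫⁻ x,
          ∫⁻ t in Ioi (1:ℝ), ENNReal.ofReal (t ^ ((1 + b) * r) * g (t • x) ^ r) :=
        lintegral_const_mul' _ _ (ENNReal.rpow_ne_top_of_nonneg (by positivity) hκ)
    _ = κ ^ (r / q) * ∫⁻ t in Ioi (1:ℝ),
          ∫⁻ x, ENNReal.ofReal (t ^ ((1 + b) * r) * g (t • x) ^ r) := by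
        rw [lintegral_lintegral_swap (hKm.aemeasurable)]
    _ = κ ^ (r / q) * ∫⁻ t in Ioi (1:ℝ), ENNReal.ofReal (t ^ ((1 + b) * r - d)) * G := by
        congr 1
        refine setLIntegral_congr_fun measurableSet_Ioi (fun t ht => ?_)
        have ht0 : (0:ℝ) < t := lt_trans one_pos ht
        have hstep : ∫⁻ x, ENNReal.ofReal (t ^ ((1 + b) * r) * g (t • x) ^ r) =
            ENNReal.ofReal (t ^ ((1 + b) * r)) * ∫⁻ x, ENNReal.ofReal (g (t • x) ^ r) := by
          rw [← lintegral_const_mul' _ _ ENNReal.ofReal_ne_top]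
          congr 1; ext x
          rw [← ENNReal.ofReal_mul (by positivity)]
        have hmeas : Measurable fun y : EuclideanSpace ℝ (Fin d) =>
            ENNReal.ofReal (g y ^ r) :=
          ENNReal.measurable_ofReal.comp (hgcont.measurable.pow_const _)
        rw [hstep, lint_scale t ht0.ne' (fun y => ENNReal.ofReal (g y ^ r)) hmeas, hGdef,
          ← mul_assoc,
          ← ENNReal.ofReal_mul (by positivity)]
        congr 2
        rw [abs_of_pos ht0, ← Real.rpow_natCast t d, ← Real.rpow_neg ht0.le,
          ← Real.rpow_add ht0]
        ring_nf
    _ = κ ^ (r / q) * (κ₂ * G) := by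
        have hmeas2 : AEMeasurable (fun t : ℝ => ENNReal.ofReal (t ^ ((1 + b) * r - (d:ℝ))))
            (volume.restrict (Ioi 1)) :=
          (ENNReal.measurable_ofReal.comp (measurable_id.pow_const _)).aemeasurable
        rw [lintegral_mul_const'' G hmeas2]
    _ = C * G := by rw [hCdef]; ring
    _ ≤ ENNReal.ofReal (C.toReal + 1) * G := by
        refine mul_le_mul_left ?_ _
        calc C = ENNReal.ofReal C.toReal := (ENNReal.ofReal_toReal hC).symm
          _ ≤ _ := ENNReal.ofReal_le_ofReal (by linarith [ENNReal.toReal_nonneg (a := C)])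
end
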